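/- Let A be a nonzero purely imaginary quaternion and B ∈ ℍ with ‖B‖ = 1. Define γ = (α, β) : [0, ∞) → ℍ × Im ℍ by α(λ) = −A⁻¹ · (1 − exp(λ A)) · B and β(λ) = −(2/‖A‖³) · (‖A‖λ − sin(‖A‖λ)) · A. Then γ(0) = (0,0), γ is horizontal, ‖α′(λ)‖ = 1 for every λ ≥ 0, and consequently d_cc((0,0), γ(λ)) ≤ λ for every λ ≥ 0. -/

import Mathlib

open Quaternion Set

/-- The horizontality condition at a point of differentiability:
`β′(l) = −2 Im(α′(l) · conj(α(l)))`. -/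
def HorizontalAt (α β : ℝ → ℍ[ℝ]) (l : ℝ) : Prop :=
  ∃ a' b' : ℍ[ℝ], HasDerivAt α a' l ∧ HasDerivAt β b' l ∧
    b' = (-2 : ℝ) • Quaternion.im (a' * star (α l))

/-- A piecewise-C¹ horizontal curve `(α, β) : [a, b] → ℍ × Im ℍ`: it is continuous,
takes vertical values in the imaginary quaternions, and away from a finite set of
points it is differentiable with continuous derivative and satisfies the
horizontality condition. -/
def IsPiecewiseHorizontal (α β : ℝ → ℍ[ℝ]) (a b : ℝ) : Prop :=
  ContinuousOn (fun l => (α l, β l)) (Icc a b) ∧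
  (∀ l ∈ Icc a b, (β l).re = 0) ∧
  ∃ F : Finset ℝ,
    (∀ l ∈ Icc a b, l ∉ F → HorizontalAt α β l) ∧
    ContinuousOn (fun l => deriv α l) (Icc a b \ F)

/-- The horizontal length of a curve: the integral of the norm of the derivative
of the horizontal projection. -/
noncomputable def hLength (α : ℝ → ℍ[ℝ]) (a b : ℝ) : ℝ :=
  ∫ l in a..b, ‖deriv α l‖

/-- The Carnot–Carathéodory distance on the quaternionic Heisenberg group:
the infimum of horizontal lengths of piecewise-C¹ horizontal curves joining the
two points. -/
noncomputable def ccDist (P P' : ℍ[ℝ] × ℍ[ℝ]) : ℝ :=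
  sInf {L : ℝ | ∃ (a b : ℝ) (α β : ℝ → ℍ[ℝ]), a ≤ b ∧
    IsPiecewiseHorizontal α β a b ∧ (α a, β a) = P ∧ (α b, β b) = P' ∧
    L = hLength α a b}

/-! Since `A` is imaginary, `u(λ) = exp(λA) = cos(‖A‖λ) + (sin(‖A‖λ)/‖A‖)A` is a unit quaternion,
so `α′ = uB` has unit length. Unitarity of `u` and `B` collapses `α′ · conj α` to
`(1 − u) · conj A⁻¹ = ‖A‖⁻²(1 − u)A`, whose imaginary part `‖A‖⁻²(1 − cos(‖A‖λ))A` is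
exactly `−β′/2`. So `γ` is a smooth horizontal curve, and on `[0, λ]` its length is `λ`. -/

open NormedSpace

section CarnotCaratheodory

variable {α β : ℝ → ℍ[ℝ]} {a b : ℝ}

theorem hLength_nonneg (hab : a ≤ b) : 0 ≤ hLength α a b :=
  intervalIntegral.integral_nonneg hab fun _ _ => norm_nonneg _

theorem hLength_eq_sub_of_norm_deriv_eq_one (h : ∀ l ∈ uIcc a b, ‖deriv α l‖ = 1) :
    hLength α a b = b - a := by
  rw [hLength, intervalIntegral.integral_congr h, intervalIntegral.integral_const, smul_eq_mul,
    mul_one]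

theorem ccDist_le_hLength (hab : a ≤ b) (h : IsPiecewiseHorizontal α β a b) :
    ccDist (α a, β a) (α b, β b) ≤ hLength α a b := by
  refine csInf_le ⟨0, ?_⟩ ⟨a, b, α, β, hab, h, rfl, rfl, rfl⟩
  rintro L ⟨a', b', α', β', hab', -, -, -, rfl⟩
  exact hLength_nonneg hab'

theorem isPiecewiseHorizontal_of_horizontalAt (hre : ∀ l ∈ Icc a b, (β l).re = 0)
    (hhor : ∀ l ∈ Icc a b, HorizontalAt α β l) (hderiv : ContinuousOn (deriv α) (Icc a b)) :
    IsPiecewiseHorizontal α β a b := by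
  refine ⟨fun l hl => ?_, hre, ∅, fun l hl _ => hhor l hl, by simpa using hderiv⟩
  obtain ⟨a', b', hα, hβ, -⟩ := hhor l hl
  exact (hα.continuousAt.prodMk hβ.continuousAt).continuousWithinAt

end CarnotCaratheodory

theorem mul_star_neg_mul_one_sub_mul {R : Type*} [Ring R] [StarRing R] {u B : R}
    (hu : u * star u = 1) (hB : B * star B = 1) (C : R) :
    u * B * star (-(C * ((1 - u) * B))) = (1 - u) * star C := by
  calc u * B * star (-(C * ((1 - u) * B)))
      = -(u * (B * star B) * (1 - star u) * star C) := by
        simp only [star_neg, star_mul, star_sub, star_one]; noncomm_ring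
    _ = (1 - u) * star C := by rw [hB, mul_one, mul_sub, hu]; noncomm_ring

section ImaginaryQuaternion

variable {A : ℍ[ℝ]}

theorem star_inv_of_re_eq_zero (hA : A.re = 0) : star A⁻¹ = (‖A‖ ^ 2)⁻¹ • A := by
  rw [star_inv₀, star_eq_neg.mpr hA, inv_def, normSq_neg, star_neg, star_eq_neg.mpr hA, neg_neg,
    normSq_eq_norm_mul_self, sq]

theorem exp_smul_of_re_eq_zero (hA : A.re = 0) (l : ℝ) :
    exp (l • A) = ↑(Real.cos (‖A‖ * l)) + (Real.sin (‖A‖ * l) / ‖A‖) • A := by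
  rcases eq_or_ne l 0 with rfl | hl
  · simp
  rcases eq_or_ne A 0 with rfl | hA0
  · simp
  have hnorm : ‖A‖ ≠ 0 := norm_ne_zero_iff.mpr hA0
  have hcos : Real.cos (|l| * ‖A‖) = Real.cos (‖A‖ * l) := by
    rcases abs_choice l with h | h <;> simp [h, mul_comm]
  have hsin : Real.sin (|l| * ‖A‖) / (|l| * ‖A‖) * l = Real.sin (‖A‖ * l) / ‖A‖ := by
    rcases abs_choice l with h | h <;> rw [h]
    · field_simp
    · field_simp
      simp
  rw [exp_of_re_eq_zero _ (by simp [hA]), norm_smul, Real.norm_eq_abs, smul_smul, hcos, hsin]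

theorem norm_exp_smul_of_re_eq_zero (hA : A.re = 0) (l : ℝ) : ‖exp (l • A)‖ = 1 := by
  simp [hA]

theorem im_one_sub_exp_smul_mul_self (hA : A.re = 0) (l : ℝ) :
    ((1 - exp (l • A)) * A).im = (1 - Real.cos (‖A‖ * l)) • A := by
  rw [exp_smul_of_re_eq_zero hA]
  ext <;> simp [hA] <;> ring

end ImaginaryQuaternion

noncomputable def geodesicHor (A B : ℍ[ℝ]) (l : ℝ) : ℍ[ℝ] :=
  -(A⁻¹ * ((1 - exp (l • A)) * B))

noncomputable def geodesicVert (A : ℍ[ℝ]) (l : ℝ) : ℍ[ℝ] :=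
  -(2 / ‖A‖ ^ 3 * (‖A‖ * l - Real.sin (‖A‖ * l))) • A

section Geodesic

variable {A B : ℍ[ℝ]}

theorem hasDerivAt_geodesicHor (hA : A ≠ 0) (B : ℍ[ℝ]) (l : ℝ) :
    HasDerivAt (geodesicHor A B) (exp (l • A) * B) l := by
  refine ((((hasDerivAt_const l 1).sub (hasDerivAt_exp_smul_const' A l)).mul_const B).const_mul
    A⁻¹).neg.congr_deriv ?_
  rw [zero_sub, neg_mul, mul_neg, neg_neg, mul_assoc, inv_mul_cancel_left₀ hA]

theorem hasDerivAt_geodesicVert (hA : A ≠ 0) (l : ℝ) :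
    HasDerivAt (geodesicVert A) ((-2 * (1 - Real.cos (‖A‖ * l)) / ‖A‖ ^ 2) • A) l := by
  have hlin : HasDerivAt (fun x : ℝ => ‖A‖ * x) ‖A‖ l := by
    simpa using (hasDerivAt_id l).const_mul ‖A‖
  refine (((hlin.sub ((Real.hasDerivAt_sin _).comp l hlin)).const_mul
    (2 / ‖A‖ ^ 3)).neg.smul_const A).congr_deriv ?_
  have := norm_ne_zero_iff.mpr hA
  congr 1
  field_simp

theorem geodesicVert_re (hA : A.re = 0) (l : ℝ) : (geodesicVert A l).re = 0 := by
  simp [geodesicVert, hA]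

theorem geodesic_horizontal (hA : A.re = 0) (hB : ‖B‖ = 1) (l : ℝ) :
    (-2 : ℝ) • (exp (l • A) * B * star (geodesicHor A B l)).im
      = (-2 * (1 - Real.cos (‖A‖ * l)) / ‖A‖ ^ 2) • A := by
  have hunit : ∀ q : ℍ[ℝ], ‖q‖ = 1 → q * star q = 1 := fun q hq => by
    rw [self_mul_star, normSq_eq_norm_mul_self, hq, mul_one, coe_one]
  rw [geodesicHor, mul_star_neg_mul_one_sub_mul (hunit _ (norm_exp_smul_of_re_eq_zero hA l))
    (hunit B hB), star_inv_of_re_eq_zero hA, mul_smul_comm, im_smul,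
    im_one_sub_exp_smul_mul_self hA, smul_smul, smul_smul]
  ring_nf

end Geodesic

theorem cc_geodesic_properties
    (A B : ℍ[ℝ]) (hA : A ≠ 0) (him : A.re = 0) (hB : ‖B‖ = 1)
    (α β : ℝ → ℍ[ℝ])
    (hα : α = fun l => -(A⁻¹ * ((1 - NormedSpace.exp (l • A)) * B)))
    (hβ : β = fun l => -(2 / ‖A‖ ^ 3 * (‖A‖ * l - Real.sin (‖A‖ * l))) • A) :
    α 0 = 0 ∧ β 0 = 0 ∧
    (∀ l : ℝ, 0 ≤ l →
      (∃ a' b' : ℍ[ℝ], HasDerivAt α a' l ∧ HasDerivAt β b' l ∧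
        b' = (-2 : ℝ) • Quaternion.im (a' * star (α l)) ∧ ‖a'‖ = 1) ∧
      (β l).re = 0 ∧
      ccDist (0, 0) (α l, β l) ≤ l) := by
  obtain rfl : α = geodesicHor A B := hα
  obtain rfl : β = geodesicVert A := hβ
  have hα0 : geodesicHor A B 0 = 0 := by simp [geodesicHor]
  have hβ0 : geodesicVert A 0 = 0 := by simp [geodesicVert]
  have hderiv : deriv (geodesicHor A B) = fun l => exp (l • A) * B :=
    funext fun l => (hasDerivAt_geodesicHor hA B l).deriv
  have hspeed (l : ℝ) : ‖exp (l • A) * B‖ = 1 := by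
    rw [norm_mul, norm_exp_smul_of_re_eq_zero him, hB, one_mul]
  have hhor (l : ℝ) : HorizontalAt (geodesicHor A B) (geodesicVert A) l :=
    ⟨_, _, hasDerivAt_geodesicHor hA B l, hasDerivAt_geodesicVert hA l,
      (geodesic_horizontal him hB l).symm⟩
  refine ⟨hα0, hβ0, fun l hl => ⟨?_, geodesicVert_re him l, ?_⟩⟩
  · exact ⟨_, _, hasDerivAt_geodesicHor hA B l, hasDerivAt_geodesicVert hA l,
      (geodesic_horizontal him hB l).symm, hspeed l⟩
  have hpiece : IsPiecewiseHorizontal (geodesicHor A B) (geodesicVert A) 0 l := by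
    refine isPiecewiseHorizontal_of_horizontalAt (fun t _ => geodesicVert_re him t)
      (fun t _ => hhor t) ?_
    rw [hderiv]
    exact fun t _ => ((hasDerivAt_exp_smul_const A t).continuousAt.mul
      continuousAt_const).continuousWithinAt
  calc ccDist (0, 0) (geodesicHor A B l, geodesicVert A l)
      ≤ hLength (geodesicHor A B) 0 l := by
        simpa only [hα0, hβ0] using ccDist_le_hLength hl hpiece
    _ = l := by
      rw [hLength_eq_sub_of_norm_deriv_eq_one fun t _ => hderiv ▸ hspeed t, sub_zero]
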